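/- arXiv:1904.06021 — 2 statements merged into one kernel-verified Lean document; each statement's English description precedes it below -/
import Mathlib

section
/- Let S₁ and S₂ be big-trees and let g ∈ G. Then g•S₁ = S₂ if and only if g PStab(S₁) g⁻¹ = PStab(S₂). In particular, two big-trees with the same pointwise stabilizer are equal. -/
open MulAction Pointwise

/-- The pointwise stabilizer of a set of vertices `S`. -/
def PStab (G : Type*) [Group G] {V : Type*} [MulAction G V] (S : Set V) : Subgroup G :=
  ⨅ v ∈ S, MulAction.stabilizer G v

/-- `S` is a subtree of `T`: it is nonempty and its induced subgraph is connected. -/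
def IsSubtree {V : Type*} (T : SimpleGraph V) (S : Set V) : Prop :=
  S.Nonempty ∧ (T.induce S).Connected

/-- `S` is a nontrivial subtree: a subtree containing two adjacent vertices. -/
def IsNontrivialSubtree {V : Type*} (T : SimpleGraph V) (S : Set V) : Prop :=
  IsSubtree T S ∧ ∃ u ∈ S, ∃ v ∈ S, T.Adj u v

/-- `S` is a big-tree: a nontrivial subtree with infinite pointwise stabilizer, not properly
contained in a subtree with the same pointwise stabilizer. -/
def IsBigTree (G : Type*) [Group G] {V : Type*} [MulAction G V]
    (T : SimpleGraph V) (S : Set V) : Prop :=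
  IsNontrivialSubtree T S ∧ ((PStab G S : Subgroup G) : Set G).Infinite ∧
    ¬ ∃ S' : Set V, IsSubtree T S' ∧ S ⊂ S' ∧ PStab G S' = PStab G S

/-- Conjugation of a subgroup: `conjSub g H = g H g⁻¹`. -/
def conjSub {G : Type*} [Group G] (g : G) (H : Subgroup G) : Subgroup G :=
  H.map (MulAut.conj g).toMonoidHom

section Aux

variable {G V : Type*} [Group G] [MulAction G V]

lemma mem_PStab' {S : Set V} {h : G} : h ∈ PStab G S ↔ ∀ v ∈ S, h • v = v := by
  simp [PStab, Subgroup.mem_iInf, MulAction.mem_stabilizer_iff]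

lemma mem_conjSub' {g x : G} {H : Subgroup G} : x ∈ conjSub g H ↔ g⁻¹ * x * g ∈ H := by
  simp only [conjSub, Subgroup.mem_map, MulEquiv.coe_toMonoidHom, MulAut.conj_apply]
  constructor
  · rintro ⟨h, hh, rfl⟩
    have : g⁻¹ * (g * h * g⁻¹) * g = h := by group
    rwa [this]
  · intro h
    exact ⟨_, h, by group⟩

lemma conjSub_conjSub_inv (g : G) (H : Subgroup G) : conjSub g⁻¹ (conjSub g H) = H := by
  ext x
  rw [mem_conjSub', mem_conjSub']
  have : g⁻¹ * (g⁻¹⁻¹ * x * g⁻¹) * g = x := by group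
  rw [this]

lemma PStab_smul' (g : G) (S : Set V) : PStab G (g • S) = conjSub g (PStab G S) := by
  ext x
  rw [mem_conjSub', mem_PStab', mem_PStab']
  constructor
  · intro hx v hv
    have h1 := hx (g • v) (Set.smul_mem_smul_set hv)
    have h2 := congrArg (fun w => g⁻¹ • w) h1
    simpa [mul_smul] using h2
  · rintro hx v ⟨u, hu, rfl⟩
    have h1 := hx u hu
    have h2 := congrArg (fun w => g • w) h1
    simpa [mul_smul] using h2

lemma PStab_antitone {S S' : Set V} (h : S ⊆ S') : PStab G S' ≤ PStab G S := by
  intro x hx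
  rw [mem_PStab'] at hx ⊢
  exact fun v hv => hx v (h hv)

/-- The graph isomorphism of `T` induced by the action of `g`. -/
def actIso (T : SimpleGraph V)
    (hadj : ∀ (g : G) (u v : V), T.Adj u v ↔ T.Adj (g • u) (g • v)) (g : G) : T ≃g T where
  toEquiv := MulAction.toPerm g
  map_rel_iff' := @fun u v => (hadj g u v).symm

/-- The graph isomorphism between `T.induce S` and `T.induce (g • S)`. -/
def induceIso (T : SimpleGraph V)
    (hadj : ∀ (g : G) (u v : V), T.Adj u v ↔ T.Adj (g • u) (g • v)) (g : G) (S : Set V) :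
    T.induce S ≃g T.induce (g • S) where
  toFun v := ⟨g • v.1, Set.smul_mem_smul_set v.2⟩
  invFun w := ⟨g⁻¹ • w.1, by
    obtain ⟨u, hu, huw⟩ := w.2
    rw [← huw]
    simpa using hu⟩
  left_inv v := Subtype.ext (inv_smul_smul g v.1)
  right_inv w := Subtype.ext (smul_inv_smul g w.1)
  map_rel_iff' := @fun a b => (hadj g a.1 b.1).symm

lemma IsSubtree.smul {T : SimpleGraph V}
    (hadj : ∀ (g : G) (u v : V), T.Adj u v ↔ T.Adj (g • u) (g • v)) {S : Set V}
    (hS : IsSubtree T S) (g : G) : IsSubtree T (g • S) := by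
  refine ⟨hS.1.smul_set, ?_⟩
  exact (SimpleGraph.Iso.connected_iff (induceIso T hadj g S)).1 hS.2

lemma IsBigTree.smul {T : SimpleGraph V}
    (hadj : ∀ (g : G) (u v : V), T.Adj u v ↔ T.Adj (g • u) (g • v)) {S : Set V}
    (hS : IsBigTree G T S) (g : G) : IsBigTree G T (g • S) := by
  obtain ⟨⟨hsub, u, hu, v, hv, huv⟩, hinf, hmax⟩ := hS
  refine ⟨⟨hsub.smul hadj g, g • u, Set.smul_mem_smul_set hu, g • v,
    Set.smul_mem_smul_set hv, (hadj g u v).1 huv⟩, ?_, ?_⟩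
  · rw [PStab_smul']
    have : ((conjSub g (PStab G S) : Subgroup G) : Set G)
        = (MulAut.conj g) '' (PStab G S : Set G) := by
      simp [conjSub, Subgroup.coe_map]
    rw [this]
    exact hinf.image ((MulAut.conj g).injective.injOn)
  · rintro ⟨S', hS'sub, hss, hP⟩
    apply hmax
    refine ⟨g⁻¹ • S', hS'sub.smul hadj g⁻¹, ?_, ?_⟩
    · constructor
      · intro x hx
        exact ⟨g • x, hss.1 (Set.smul_mem_smul_set hx), inv_smul_smul g x⟩
      · intro hsub'
        apply hss.2
        intro y hy
        have hy' : g⁻¹ • y ∈ S := hsub' ⟨y, hy, rfl⟩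
        simpa [smul_inv_smul] using Set.smul_mem_smul_set (a := g) hy'
    · rw [PStab_smul', hP, PStab_smul', conjSub_conjSub_inv]

lemma list_map_eq_self_fix {α : Type*} {f : α → α} :
    ∀ {l : List α}, l.map f = l → ∀ a ∈ l, f a = a := by
  intro l
  induction l with
  | nil => simp
  | cons a l ih =>
    intro h b hb
    rw [List.map_cons, List.cons.injEq] at h
    rcases List.mem_cons.1 hb with rfl | hb
    · exact h.1
    · exact ih h.2 b hb

/-- Two big-trees with the same pointwise stabilizer are equal. -/
lemma bigTree_eq_of_pstab_eq {T : SimpleGraph V} (htree : T.IsTree)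
    (hadj : ∀ (g : G) (u v : V), T.Adj u v ↔ T.Adj (g • u) (g • v))
    {S₁ S₂ : Set V} (h₁ : IsBigTree G T S₁) (h₂ : IsBigTree G T S₂)
    (hps : PStab G S₁ = PStab G S₂) : S₁ = S₂ := by
  obtain ⟨⟨⟨hne₁, hc₁⟩, -⟩, -, hmax₁⟩ := h₁
  obtain ⟨⟨⟨hne₂, hc₂⟩, -⟩, -, hmax₂⟩ := h₂
  obtain ⟨x₀, hx₀⟩ := hne₁
  obtain ⟨y₀, hy₀⟩ := hne₂
  obtain ⟨p, hp, hup⟩ := htree.existsUnique_path x₀ y₀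
  set P : Set V := {v | v ∈ p.support} with hPdef
  -- the hull S' = S₁ ∪ P ∪ S₂ is a subtree
  set S' : Set V := (S₁ ∪ P) ∪ S₂ with hS'def
  have hS₁sub : S₁ ⊆ S' := fun v hv => Or.inl (Or.inl hv)
  have hS₂sub : S₂ ⊆ S' := fun v hv => Or.inr hv
  have hconn : (T.induce S').Connected := by
    apply SimpleGraph.induce_union_connected
    · exact (SimpleGraph.induce_union_connected hc₁.preconnected p.connected_induce_support.preconnected
        ⟨x₀, hx₀, p.start_mem_support⟩).preconnected
    · exact hc₂.preconnected
    · exact ⟨y₀, Or.inr p.end_mem_support, hy₀⟩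
  have hS'subtree : IsSubtree T S' := ⟨⟨x₀, hS₁sub hx₀⟩, hconn⟩
  -- the stabilizer of S₁ fixes S' pointwise
  have hfix : ∀ h ∈ PStab G S₁, ∀ v ∈ S', h • v = v := by
    intro h hh v hv
    have hh₂ : h ∈ PStab G S₂ := hps ▸ hh
    rcases hv with (hv | hv) | hv
    · exact mem_PStab'.1 hh v hv
    · -- v lies on the unique path from x₀ to y₀
      have hfx : h • x₀ = x₀ := mem_PStab'.1 hh x₀ hx₀
      have hfy : h • y₀ = y₀ := mem_PStab'.1 hh₂ y₀ hy₀
      set φ := actIso T hadj h with hφ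
      have hinj : Function.Injective φ.toHom := φ.toEquiv.injective
      set q : T.Walk x₀ y₀ := (p.map φ.toHom).copy hfx hfy with hq
      have hqpath : q.IsPath := by
        rw [hq]; refine (SimpleGraph.Walk.isPath_copy (p.map φ.toHom) hfx hfy).mpr ?_
        exact SimpleGraph.Walk.map_isPath_of_injective hinj hp
      have hqp : q = p := hup q hqpath
      have hsupp : p.support.map (fun v => h • v) = p.support := by
        have := congrArg SimpleGraph.Walk.support hqp
        rw [hq] at this
        rwa [SimpleGraph.Walk.support_copy (p.map φ.toHom) hfx hfy, SimpleGraph.Walk.support_map] at this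
      exact list_map_eq_self_fix hsupp v hv
    · exact mem_PStab'.1 hh₂ v hv
  have hPStabS' : PStab G S' = PStab G S₁ := by
    apply le_antisymm (PStab_antitone hS₁sub)
    intro h hh
    rw [mem_PStab']
    exact hfix h hh
  have hS₁eq : S₁ = S' := by
    by_contra hne
    exact hmax₁ ⟨S', hS'subtree, ssubset_of_subset_of_ne hS₁sub hne, hPStabS'⟩
  have hS₂eq : S₂ = S' := by
    by_contra hne
    exact hmax₂ ⟨S', hS'subtree, ssubset_of_subset_of_ne hS₂sub hne, hPStabS'.trans hps⟩
  rw [hS₁eq, hS₂eq]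

end Aux

/-- for big-trees `S₁`, `S₂` and `g ∈ G`, `g • S₁ = S₂` iff
`g PStab(S₁) g⁻¹ = PStab(S₂)`.  In particular, two big-trees with the same pointwise
stabilizer are equal. -/
theorem smul_bigTree_eq_iff_conj_pstab_eq {G V : Type*} [Group G] [MulAction G V]
    (T : SimpleGraph V) (htree : T.IsTree)
    (hadj : ∀ (g : G) (u v : V), T.Adj u v ↔ T.Adj (g • u) (g • v))
    (hninv : ¬ ∃ (g : G) (u v : V), T.Adj u v ∧ g • u = v ∧ g • v = u)
    (S₁ S₂ : Set V) (h₁ : IsBigTree G T S₁) (h₂ : IsBigTree G T S₂) (g : G) :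
    (g • S₁ = S₂ ↔ conjSub g (PStab G S₁) = PStab G S₂) ∧
      (PStab G S₁ = PStab G S₂ → S₁ = S₂) := by
  constructor
  · constructor
    · rintro rfl
      exact (PStab_smul' g S₁).symm
    · intro hconj
      have hps : PStab G (g • S₁) = PStab G S₂ := by
        rw [PStab_smul']; exact hconj
      exact bigTree_eq_of_pstab_eq htree hadj (h₁.smul hadj g) h₂ hps
  · exact bigTree_eq_of_pstab_eq htree hadj h₁ h₂
end

section
/- Let S₁ be a lowest big-tree and let S₂ be a nontrivial subtree. If PStab(S₁) ∩ PStab(S₂) is infinite, then S₂ ⊆ S₁; in particular PStab(S₁) ≤ PStab(S₂). -/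
/-!
Let `H = PStab S₁ ⊓ PStab S₂`. In a tree, a graph automorphism fixing two vertices fixes the
unique path between them, so the fixed set `Fix H` is a subtree. It contains `S₁ ∪ S₂`, and
since `Fix (PStab (Fix H)) = Fix H`, no subtree properly containing it has the same pointwise
stabilizer. Hence `Fix H` is a big-tree containing `S₁`, and lowestness forces
`Fix H = S₁`, whence `S₂ ⊆ S₁`.
-/

open MulAction Pointwise

/-- A big-tree is lowest if it is not properly contained in another big-tree. -/
def IsLowestBigTree (G : Type*) [Group G] {V : Type*} [MulAction G V]
    (T : SimpleGraph V) (S : Set V) : Prop :=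
  IsBigTree G T S ∧ ¬ ∃ S' : Set V, IsBigTree G T S' ∧ S ⊂ S'

lemma PStab_eq_fixingSubgroup (G : Type*) [Group G] {V : Type*} [MulAction G V] (S : Set V) :
    PStab G S = fixingSubgroup G S := by
  ext g
  simp [PStab, mem_fixingSubgroup_iff]

lemma subset_fixedPoints_iff_le_PStab {G : Type*} [Group G] {V : Type*} [MulAction G V]
    {S : Set V} {H : Subgroup G} : S ⊆ fixedPoints H V ↔ H ≤ PStab G S := by
  rw [PStab_eq_fixingSubgroup]
  exact ((fixingSubgroup_fixedPoints_gc G V).le_iff_le).symm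

lemma PStab_antitone_s5 (G : Type*) [Group G] {V : Type*} [MulAction G V] :
    Antitone (PStab G : Set V → Subgroup G) := fun _ _ h => by
  simpa only [PStab_eq_fixingSubgroup] using fixingSubgroup_antitone G V h

namespace SimpleGraph

variable {V : Type*} {T : SimpleGraph V}

lemma induce_connected_of_forall_exists_walk {S : Set V} (hne : S.Nonempty)
    (hwalk : ∀ u ∈ S, ∀ v ∈ S, ∃ p : T.Walk u v, ∀ w ∈ p.support, w ∈ S) :
    (T.induce S).Connected := by
  obtain ⟨u, hu⟩ := hne
  refine T.induce_connected_of_patches u hu fun {v} hv => ?_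
  obtain ⟨p, hp⟩ := hwalk u hu v hv
  exact ⟨{w | w ∈ p.support}, hp, p.start_mem_support, p.end_mem_support,
    (p.connected_induce_support).preconnected _ _⟩

lemma IsTree.map_eq_self_of_isPath (htree : T.IsTree) {f : T →g T} (hf : Function.Injective f)
    {u v : V} (hu : f u = u) (hv : f v = v) {p : T.Walk u v} (hp : p.IsPath) :
    ∀ w ∈ p.support, f w = w := by
  have hmap : (p.map f).copy hu hv = p :=
    (htree.existsUnique_path u v).unique ((Walk.isPath_copy _ _ _).mpr (hp.map hf)) hp
  have hsupport : p.support.map f = p.support.map id := by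
    rw [List.map_id, ← Walk.support_map, ← Walk.support_copy _ hu hv, hmap]
  exact List.map_eq_map_iff.mp hsupport

end SimpleGraph

section Tree

open SimpleGraph

variable {G V : Type*} [Group G] [MulAction G V] {T : SimpleGraph V}

lemma isSubtree_fixedPoints (htree : T.IsTree)
    (hadj : ∀ (g : G) (u v : V), T.Adj u v ↔ T.Adj (g • u) (g • v)) {H : Subgroup G}
    (hne : (fixedPoints H V).Nonempty) : IsSubtree T (fixedPoints H V) := by
  refine ⟨hne, induce_connected_of_forall_exists_walk hne fun u hu v hv => ?_⟩
  obtain ⟨p, hp, -⟩ := htree.existsUnique_path u v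
  refine ⟨p, fun w hw h => ?_⟩
  let f : T →g T := ⟨fun x => (h : G) • x, (hadj h _ _).mp⟩
  exact htree.map_eq_self_of_isPath (f := f) (MulAction.injective (h : G)) (hu h) (hv h)
    hp w hw

lemma isBigTree_fixedPoints (htree : T.IsTree)
    (hadj : ∀ (g : G) (u v : V), T.Adj u v ↔ T.Adj (g • u) (g • v)) {H : Subgroup G}
    (hH : (H : Set G).Infinite) {u v : V} (hu : u ∈ fixedPoints H V) (hv : v ∈ fixedPoints H V)
    (huv : T.Adj u v) : IsBigTree G T (fixedPoints H V) := by
  have hH_le : H ≤ PStab G (fixedPoints H V) := subset_fixedPoints_iff_le_PStab.mp le_rfl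
  refine ⟨⟨isSubtree_fixedPoints htree hadj ⟨u, hu⟩, u, hu, v, hv, huv⟩,
    hH.mono hH_le, ?_⟩
  rintro ⟨S', -, hsub, hPStab⟩
  exact hsub.2 (subset_fixedPoints_iff_le_PStab.mpr (hPStab ▸ hH_le))

end Tree

lemma IsLowestBigTree.eq_of_subset {G V : Type*} [Group G] [MulAction G V]
    {T : SimpleGraph V} {S S' : Set V} (hS : IsLowestBigTree G T S) (hSS' : S ⊆ S')
    (hS' : IsBigTree G T S') : S' = S := by
  by_contra hne
  exact hS.2 ⟨S', hS', hSS'.ssubset_of_ne (Ne.symm hne)⟩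

theorem subset_lowestBigTree_of_infinite_inter_pstab_general {G V : Type*} [Group G] [MulAction G V]
    (T : SimpleGraph V) (htree : T.IsTree)
    (hadj : ∀ (g : G) (u v : V), T.Adj u v ↔ T.Adj (g • u) (g • v))
    (S₁ S₂ : Set V) (h₁ : IsLowestBigTree G T S₁)
    (hinf : ((PStab G S₁ ⊓ PStab G S₂ : Subgroup G) : Set G).Infinite) :
    S₂ ⊆ S₁ ∧ PStab G S₁ ≤ PStab G S₂ := by
  set H := PStab G S₁ ⊓ PStab G S₂
  have hS₁ : S₁ ⊆ fixedPoints H V := subset_fixedPoints_iff_le_PStab.mpr inf_le_left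
  have hS₂ : S₂ ⊆ fixedPoints H V := subset_fixedPoints_iff_le_PStab.mpr inf_le_right
  obtain ⟨-, u, hu, v, hv, huv⟩ := h₁.1.1
  have hfix : fixedPoints H V = S₁ :=
    h₁.eq_of_subset hS₁ (isBigTree_fixedPoints htree hadj hinf (hS₁ hu) (hS₁ hv) huv)
  have hsub : S₂ ⊆ S₁ := hfix ▸ hS₂
  exact ⟨hsub, PStab_antitone_s5 G hsub⟩

/-- if `S₁` is a lowest big-tree, `S₂` is a nontrivial subtree, and
`PStab S₁ ∩ PStab S₂` is infinite, then `S₂ ⊆ S₁`; in particular `PStab S₁ ≤ PStab S₂`. -/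
theorem subset_lowestBigTree_of_infinite_inter_pstab {G V : Type*} [Group G] [MulAction G V]
    (T : SimpleGraph V) (htree : T.IsTree)
    (hadj : ∀ (g : G) (u v : V), T.Adj u v ↔ T.Adj (g • u) (g • v))
    (hninv : ¬ ∃ (g : G) (u v : V), T.Adj u v ∧ g • u = v ∧ g • v = u)
    (S₁ S₂ : Set V) (h₁ : IsLowestBigTree G T S₁) (h₂ : IsNontrivialSubtree T S₂)
    (hinf : ((PStab G S₁ ⊓ PStab G S₂ : Subgroup G) : Set G).Infinite) :
    S₂ ⊆ S₁ ∧ PStab G S₁ ≤ PStab G S₂ :=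
  subset_lowestBigTree_of_infinite_inter_pstab_general T htree hadj S₁ S₂ h₁ hinf
end
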